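/- Sphere-packing for the 0^k-indel channel: if C ⊆ Z_q^n corrects t insertions and deletions of blocks 0^k, and every codeword x ∈ C has Hamming weight w and at least m runs of zeros of length ≥ k, then for any 0 ≤ s ≤ min(t, m), |C| · C(w+s, s) · C(m-s, t-s) ≤ q^{n + k(2s - t)} (assuming n + k(2s−t) ≥ 0). -/

import Mathlib

/-- The Hamming weight of a string over `ℤ_q`. -/
def wt (q : ℕ) (x : List (ZMod q)) : ℕ := x.countP fun a => decide (a ≠ 0)

/-- The list `[r_0(x), …, r_w(x)]` of lengths of the runs of zeros of `x`. -/
def zeroRuns (q : ℕ) : List (ZMod q) → List ℕ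
  | [] => [0]
  | a :: rest =>
    if a = 0 then
      match zeroRuns q rest with
      | r :: rs => (r + 1) :: rs
      | [] => [1]
    else 0 :: zeroRuns q rest

/-- One insertion of a block `0^k` at some position of the string `x`. -/
def Ins (q k : ℕ) (x y : List (ZMod q)) : Prop :=
  ∃ j ≤ x.length, y = x.take j ++ List.replicate k (0 : ZMod q) ++ x.drop j

/-- One deletion of a block of `k` consecutive zeros. -/
def Del (q k : ℕ) (x y : List (ZMod q)) : Prop := Ins q k y x

/-- `IndelN q k a b x y`: `y` is obtainable from `x` by `a` insertions and `b`
deletions of blocks `0^k`, in any order. -/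
inductive IndelN (q k : ℕ) : ℕ → ℕ → List (ZMod q) → List (ZMod q) → Prop
  | refl (x : List (ZMod q)) : IndelN q k 0 0 x x
  | ins {a b : ℕ} {x z y : List (ZMod q)} :
      Ins q k x z → IndelN q k a b z y → IndelN q k (a + 1) b x y
  | del {a b : ℕ} {x z y : List (ZMod q)} :
      Del q k x z → IndelN q k a b z y → IndelN q k a (b + 1) x y

/-!
Write a codeword as `x = 0^{r₀} a₁ 0^{r₁} ⋯ a_w 0^{r_w}`. Lengthen the runs by `cᵢ` blocks `0^k`
with `∑ cᵢ = s` (`C(w+s, s)` choices), then shorten by one block each of `t - s` runs of length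
`≥ k` with `cᵢ = 0` (at least `C(m-s, t-s)` choices). The nonzero letters stay put and the run
vector determines `(c, S)`, so this gives that many distinct strings of length `n + k(2s-t)`, each
reached from `x` by `s` insertions and `t - s` deletions. For distinct codewords these sets are
disjoint, and there are only `q^{n+k(2s-t)}` strings of that length.
-/

open Finset

variable {q k : ℕ}

/-- `ofZeroRuns q [r₀, …, r_w] [a₁, …, a_w] = 0^{r₀} a₁ 0^{r₁} ⋯ a_w 0^{r_w}`. -/
def ofZeroRuns (q : ℕ) : List ℕ → List (ZMod q) → List (ZMod q)
  | [], _ => []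
  | r :: _, [] => List.replicate r 0
  | r :: rs, a :: as => List.replicate r 0 ++ a :: ofZeroRuns q rs as

lemma zeroRuns_ne_nil (x : List (ZMod q)) : zeroRuns q x ≠ [] := by
  cases x with
  | nil => simp [zeroRuns]
  | cons a x =>
    by_cases ha : a = 0
    · simp only [zeroRuns, ha, ite_true]
      split <;> simp
    · simp [zeroRuns, ha]

lemma zeroRuns_replicate_append {x : List (ZMod q)} {r : ℕ} {rs : List ℕ}
    (hx : zeroRuns q x = r :: rs) (j : ℕ) :
    zeroRuns q (List.replicate j 0 ++ x) = (j + r) :: rs := by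
  induction j with
  | zero => simpa using hx
  | succ j ih =>
    simp only [List.replicate_succ, List.cons_append, zeroRuns, ite_true, ih]
    ac_rfl

lemma zeroRuns_ofZeroRuns {rs : List ℕ} {as : List (ZMod q)} (h : rs.length = as.length + 1)
    (has : ∀ a ∈ as, a ≠ 0) : zeroRuns q (ofZeroRuns q rs as) = rs := by
  induction as generalizing rs with
  | nil =>
    obtain ⟨r, rfl⟩ := List.length_eq_one_iff.1 h
    simpa [ofZeroRuns] using zeroRuns_replicate_append (q := q) (x := []) rfl r
  | cons a as ih =>
    obtain _ | ⟨r, rs⟩ := rs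
    · simp at h
    have hrs : zeroRuns q (a :: ofZeroRuns q rs as) = 0 :: rs := by
      simp [zeroRuns, has a (by simp), ih (by simpa using h) fun b hb => has b (by simp [hb])]
    simpa [ofZeroRuns] using zeroRuns_replicate_append hrs r

lemma ofZeroRuns_add_cons (j r : ℕ) (rs : List ℕ) (as : List (ZMod q)) :
    ofZeroRuns q ((j + r) :: rs) as = List.replicate j 0 ++ ofZeroRuns q (r :: rs) as := by
  cases as <;> simp only [ofZeroRuns, List.replicate_add, List.append_assoc]

lemma ofZeroRuns_zeroRuns (x : List (ZMod q)) :
    ofZeroRuns q (zeroRuns q x) (x.filter (· ≠ 0)) = x := by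
  induction x with
  | nil => simp [zeroRuns, ofZeroRuns]
  | cons a x ih =>
    by_cases ha : a = 0
    · subst ha
      obtain ⟨r, rs, hx⟩ := List.exists_cons_of_ne_nil (zeroRuns_ne_nil x)
      rw [← List.singleton_append, ← List.replicate_one, zeroRuns_replicate_append hx,
        List.filter_append, List.filter_replicate_of_neg (by simp), List.nil_append,
        ofZeroRuns_add_cons, ← hx, ih]
    · rw [List.filter_cons_of_pos (by simpa)]
      simp only [zeroRuns, ha, ite_false, ofZeroRuns, List.replicate_zero, List.nil_append, ih]

lemma length_zeroRuns (x : List (ZMod q)) : (zeroRuns q x).length = wt q x + 1 := by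
  induction x with
  | nil => simp [zeroRuns, wt]
  | cons a x ih =>
    by_cases ha : a = 0
    · subst ha
      obtain ⟨r, rs, hx⟩ := List.exists_cons_of_ne_nil (zeroRuns_ne_nil x)
      rw [← List.singleton_append, ← List.replicate_one, zeroRuns_replicate_append hx]
      simp_all [wt]
    · simp_all [zeroRuns, wt]

lemma length_zeroRuns_eq_length_filter (x : List (ZMod q)) :
    (zeroRuns q x).length = (x.filter (· ≠ 0)).length + 1 := by
  rw [length_zeroRuns, wt, List.countP_eq_length_filter]

lemma Ins.length_eq {x y : List (ZMod q)} (h : Ins q k x y) : y.length = x.length + k := by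
  obtain ⟨j, hj, rfl⟩ := h
  simp only [List.length_append, List.length_take, List.length_replicate, List.length_drop]
  omega

lemma Ins.append_left {x y : List (ZMod q)} (p : List (ZMod q)) (h : Ins q k x y) :
    Ins q k (p ++ x) (p ++ y) := by
  obtain ⟨j, hj, rfl⟩ := h
  refine ⟨p.length + j, by simp [hj], ?_⟩
  simp [List.take_length_add_append, List.drop_length_add_append]

namespace IndelN

lemma cast {a b a' b' : ℕ} {x y : List (ZMod q)} (h : IndelN q k a b x y) (ha : a = a')
    (hb : b = b') : IndelN q k a' b' x y :=
  ha ▸ hb ▸ h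

lemma trans {a b a' b' : ℕ} {x y z : List (ZMod q)} (hxy : IndelN q k a b x y)
    (hyz : IndelN q k a' b' y z) : IndelN q k (a + a') (b + b') x z := by
  induction hxy with
  | refl => exact hyz.cast (by omega) (by omega)
  | ins hi _ ih => exact (ins hi (ih hyz)).cast (by omega) (by omega)
  | del hd _ ih => exact (del hd (ih hyz)).cast (by omega) (by omega)

lemma length_add {a b : ℕ} {x y : List (ZMod q)} (h : IndelN q k a b x y) :
    y.length + k * b = x.length + k * a := by
  induction h with
  | refl => rfl
  | ins hi _ ih => rw [ih, hi.length_eq]; ring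
  | del hd _ ih => rw [hd.length_eq]; linarith

lemma append_left {a b : ℕ} {x y : List (ZMod q)} (p : List (ZMod q))
    (h : IndelN q k a b x y) : IndelN q k a b (p ++ x) (p ++ y) := by
  induction h with
  | refl => exact refl _
  | ins hi _ ih => exact ins (hi.append_left p) ih
  | del hd _ ih => exact del (hd.append_left p) ih

lemma symm_of_ins {a : ℕ} {x y : List (ZMod q)} (h : IndelN q k a 0 x y) :
    IndelN q k 0 a y x := by
  generalize hb : 0 = b at h
  induction h with
  | refl => exact refl _
  | ins hi _ ih => exact (ih hb).trans (del hi (refl _))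
  | del => omega

end IndelN

lemma indelN_replicate_append (j : ℕ) (x : List (ZMod q)) :
    IndelN q k j 0 x (List.replicate (k * j) 0 ++ x) := by
  induction j with
  | zero => simpa using IndelN.refl x
  | succ j ih =>
    have hfront : Ins q k (List.replicate (k * j) 0 ++ x) (List.replicate (k * (j + 1)) 0 ++ x) :=
      ⟨0, Nat.zero_le _, by simp [mul_add, add_comm, ← List.append_assoc]⟩
    exact ih.trans (.ins hfront (.refl _))

lemma indelN_ofZeroRuns_cons (c r : ℕ) (rs : List ℕ) (as : List (ZMod q)) :
    IndelN q k c 0 (ofZeroRuns q (r :: rs) as) (ofZeroRuns q ((r + k * c) :: rs) as) := by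
  rw [add_comm, ofZeroRuns_add_cons]
  exact indelN_replicate_append c _

lemma indelN_ofZeroRuns_zipWith (as : List (ZMod q)) (rs cs : List ℕ)
    (h : rs.length = as.length + 1) (hc : cs.length = rs.length) :
    IndelN q k cs.sum 0 (ofZeroRuns q rs as)
      (ofZeroRuns q (List.zipWith (fun r c => r + k * c) rs cs) as) := by
  induction as generalizing rs cs with
  | nil =>
    obtain ⟨r, rfl⟩ := List.length_eq_one_iff.1 h
    obtain ⟨c, rfl⟩ := List.length_eq_one_iff.1 hc
    simpa using indelN_ofZeroRuns_cons (q := q) (k := k) c r [] []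
  | cons a as ih =>
    obtain _ | ⟨r, rs⟩ := rs
    · simp at h
    obtain _ | ⟨c, cs⟩ := cs
    · simp at hc
    have hrest := (ih rs cs (by simpa using h) (by simpa using hc)).append_left
      (List.replicate (r + k * c) 0 ++ [a])
    simp only [List.append_assoc, List.singleton_append] at hrest
    simpa [ofZeroRuns, add_comm c] using (indelN_ofZeroRuns_cons c r rs (a :: as)).trans hrest

/-- Both strings reach the one with runs `rᵢ + k cᵢ = r'ᵢ + k dᵢ` by insertions alone. -/
lemma indelN_ofZeroRuns {as : List (ZMod q)} {rs rs' cs ds : List ℕ}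
    (h : rs.length = as.length + 1) (h' : rs'.length = as.length + 1)
    (hc : cs.length = rs.length) (hd : ds.length = rs'.length)
    (hrs : List.zipWith (fun r c => r + k * c) rs cs =
      List.zipWith (fun r d => r + k * d) rs' ds) :
    IndelN q k cs.sum ds.sum (ofZeroRuns q rs as) (ofZeroRuns q rs' as) := by
  have hins := indelN_ofZeroRuns_zipWith (k := k) as rs' ds h' hd
  rw [← hrs] at hins
  simpa using (indelN_ofZeroRuns_zipWith as rs cs h hc).trans hins.symm_of_ins

section ShiftRuns

variable {ι : Type*} [DecidableEq ι]

/-- The runs of zeros after inserting `cᵢ` blocks `0^k` into the `i`-th run when `i ∉ S`, and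
deleting one block from it when `i ∈ S`. -/
def shiftRuns (k : ℕ) (r c : ι → ℕ) (S : Finset ι) (i : ι) : ℕ :=
  if i ∈ S then r i - k else r i + k * c i

variable {r c c' : ι → ℕ} {S S' : Finset ι}

lemma mem_iff_shiftRuns_lt (hk : 0 < k) (hS : ∀ i ∈ S, k ≤ r i ∧ c i = 0) (i : ι) :
    i ∈ S ↔ shiftRuns k r c S i < r i := by
  unfold shiftRuns
  split_ifs with hi
  · have := (hS i hi).1
    simp only [hi, true_iff]
    omega
  · simp [hi]

lemma eq_of_shiftRuns_eq (hk : 0 < k) (hS : ∀ i ∈ S, k ≤ r i ∧ c i = 0)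
    (hS' : ∀ i ∈ S', k ≤ r i ∧ c' i = 0) (h : shiftRuns k r c S = shiftRuns k r c' S') :
    S = S' ∧ c = c' := by
  have hSS' : S = S' := by
    ext i
    rw [mem_iff_shiftRuns_lt hk hS, mem_iff_shiftRuns_lt hk hS', h]
  refine ⟨hSS', funext fun i => ?_⟩
  by_cases hi : i ∈ S
  · rw [(hS i hi).2, (hS' i (hSS' ▸ hi)).2]
  · have hi' := congrFun h i
    simp only [shiftRuns, hi, hSS' ▸ hi, ite_false, add_right_inj] at hi'
    exact Nat.eq_of_mul_eq_mul_left hk hi'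

lemma add_mul_eq_shiftRuns_add (hS : ∀ i ∈ S, k ≤ r i ∧ c i = 0) (i : ι) :
    r i + k * c i = shiftRuns k r c S i + k * if i ∈ S then 1 else 0 := by
  unfold shiftRuns
  split_ifs with hi
  · obtain ⟨hkr, hc⟩ := hS i hi
    rw [hc]
    omega
  · simp

end ShiftRuns

lemma card_support_le_of_sum_eq {ι : Type*} [Fintype ι] {c : ι →₀ ℕ} {s : ℕ}
    (hc : ∑ i, c i = s) : #c.support ≤ s := by
  calc #c.support = ∑ i ∈ c.support, 1 := card_eq_sum_ones _
    _ ≤ ∑ i ∈ c.support, c i :=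
      sum_le_sum fun i hi => Nat.one_le_iff_ne_zero.2 (Finsupp.mem_support_iff.1 hi)
    _ ≤ ∑ i, c i := sum_le_sum_of_subset (subset_univ _)
    _ = s := hc

lemma choose_mul_choose_le_card_sigma {ι : Type*} [Fintype ι] [DecidableEq ι] (D : Finset ι)
    (s u : ℕ) : (Fintype.card ι + s - 1).choose s * (#D - s).choose u ≤
      #((univ.finsuppAntidiag s).sigma fun c => (D \ c.support).powersetCard u) := by
  rw [card_sigma, ← card_univ, ← card_finsuppAntidiag_nat_eq_choose, ← smul_eq_mul]
  refine card_nsmul_le_sum _ _ _ fun c hc => ?_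
  rw [card_powersetCard]
  have hcs : #c.support ≤ s := card_support_le_of_sum_eq (mem_finsuppAntidiag.1 hc).1
  have := le_card_sdiff c.support D
  exact Nat.choose_le_choose _ (by omega)

lemma List.countP_eq_card_filter_get {α : Type*} (l : List α) (p : α → Bool) :
    l.countP p = #(univ.filter fun i => p (l.get i)) := by
  conv_lhs => rw [← List.ofFn_get l]
  rw [List.ofFn_eq_map, List.countP_map]
  convert ((List.nodup_finRange l.length).card_eq_countP (P := fun i => p (l.get i))).symm using 2
  · ext; simp
  · simp

lemma indelN_ofZeroRuns_shiftRuns (x : List (ZMod q)) {c : Fin (zeroRuns q x).length → ℕ}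
    {S : Finset (Fin (zeroRuns q x).length)}
    (hS : ∀ i ∈ S, k ≤ (zeroRuns q x).get i ∧ c i = 0) :
    IndelN q k (∑ i, c i) #S x
      (ofZeroRuns q (List.ofFn (shiftRuns k (zeroRuns q x).get c S))
        (x.filter (· ≠ 0))) := by
  have hlen := length_zeroRuns_eq_length_filter x
  have h := indelN_ofZeroRuns (k := k) (as := x.filter (· ≠ 0))
    (rs := List.ofFn (zeroRuns q x).get) (cs := List.ofFn c)
    (rs' := List.ofFn (shiftRuns k (zeroRuns q x).get c S))
    (ds := List.ofFn fun i => if i ∈ S then 1 else 0)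
    (by simpa using hlen) (by simpa using hlen) (by simp) (by simp) <|
    List.ext_getElem (by simp) fun i hi _ => by
      simpa using add_mul_eq_shiftRuns_add hS ⟨i, by simpa using hi⟩
  rwa [List.ofFn_get, ofZeroRuns_zeroRuns, List.sum_ofFn, List.sum_ofFn, sum_boole,
    Nat.cast_id, filter_mem_eq_inter, univ_inter] at h

lemma eq_of_ofZeroRuns_shiftRuns_eq (hk : 0 < k) (x : List (ZMod q))
    {c c' : Fin (zeroRuns q x).length → ℕ} {S S' : Finset (Fin (zeroRuns q x).length)}
    (hS : ∀ i ∈ S, k ≤ (zeroRuns q x).get i ∧ c i = 0)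
    (hS' : ∀ i ∈ S', k ≤ (zeroRuns q x).get i ∧ c' i = 0)
    (h : ofZeroRuns q (List.ofFn (shiftRuns k (zeroRuns q x).get c S)) (x.filter (· ≠ 0)) =
      ofZeroRuns q (List.ofFn (shiftRuns k (zeroRuns q x).get c' S')) (x.filter (· ≠ 0))) :
    S = S' ∧ c = c' := by
  have hlen := length_zeroRuns_eq_length_filter x
  have hrs := congrArg (zeroRuns q) h
  rw [zeroRuns_ofZeroRuns (by simpa using hlen) (by simp),
    zeroRuns_ofZeroRuns (by simpa using hlen) (by simp)] at hrs
  exact eq_of_shiftRuns_eq hk hS hS' (List.ofFn_injective hrs)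

lemma exists_finset_indelN (hk : 0 < k) (s u : ℕ) {m : ℕ} (x : List (ZMod q))
    (hm : m ≤ (zeroRuns q x).countP fun r => decide (k ≤ r)) :
    ∃ Y : Finset (List (ZMod q)),
      (wt q x + s).choose s * (m - s).choose u ≤ #Y ∧ ∀ y ∈ Y, IndelN q k s u x y := by
  classical
  set rs := zeroRuns q x
  let D := univ.filter fun i => k ≤ rs.get i
  have hD : m ≤ #D := hm.trans_eq (by simp [rs.countP_eq_card_filter_get, D])
  let P := (univ.finsuppAntidiag s).sigma fun c => (D \ c.support).powersetCard u
  have hP : ∀ p ∈ P, ∑ i, p.1 i = s ∧ #p.2 = u ∧ ∀ i ∈ p.2, k ≤ rs.get i ∧ p.1 i = 0 := by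
    rintro ⟨c, S⟩ hp
    simp only [P, mem_sigma, mem_finsuppAntidiag, mem_powersetCard, subset_sdiff] at hp
    obtain ⟨⟨hc, -⟩, ⟨hSD, hSc⟩, hSu⟩ := hp
    refine ⟨hc, hSu, fun i hi => ⟨(mem_filter.1 (hSD hi)).2, ?_⟩⟩
    simpa using disjoint_left.1 hSc hi
  let f : (Σ _ : Fin rs.length →₀ ℕ, Finset (Fin rs.length)) → List (ZMod q) :=
    fun p => ofZeroRuns q (List.ofFn (shiftRuns k rs.get p.1 p.2)) (x.filter (· ≠ 0))
  have hf : Set.InjOn f P := by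
    rintro ⟨c, S⟩ hp ⟨c', S'⟩ hp' h
    obtain ⟨hSS', hcc'⟩ := eq_of_ofZeroRuns_shiftRuns_eq hk x (hP _ hp).2.2 (hP _ hp').2.2 h
    exact Sigma.ext (DFunLike.coe_injective hcc') (heq_of_eq hSS')
  refine ⟨P.image f, ?_, ?_⟩
  · rw [card_image_of_injOn hf]
    calc (wt q x + s).choose s * (m - s).choose u
        ≤ (Fintype.card (Fin rs.length) + s - 1).choose s * (#D - s).choose u := by
          rw [show Fintype.card (Fin rs.length) + s - 1 = wt q x + s by
            simp [rs, length_zeroRuns, Nat.add_right_comm]]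
          gcongr
      _ ≤ #P := choose_mul_choose_le_card_sigma D s u
  · simp only [mem_image]
    rintro y ⟨p, hp, rfl⟩
    obtain ⟨hs, hu, hS⟩ := hP p hp
    have hy := indelN_ofZeroRuns_shiftRuns x hS
    rwa [hs, hu] at hy

lemma Finset.card_le_pow_of_forall_length_eq {α : Type*} [Fintype α] {Y : Finset (List α)}
    {L : ℕ} (hY : ∀ y ∈ Y, y.length = L) : #Y ≤ Fintype.card α ^ L := by
  calc #Y ≤ #(univ.map ⟨List.Vector.toList, List.Vector.toList_injective⟩) :=
        card_le_card fun y hy => mem_map.2 ⟨⟨y, hY y hy⟩, mem_univ _, rfl⟩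
    _ = Fintype.card α ^ L := by rw [card_map, card_univ, card_vector]

lemma card_mul_le_pow_of_pairwiseDisjoint {α ι : Type*} [Fintype α] [DecidableEq α]
    {I : Finset ι} {Y : ι → Finset (List α)} {B L : ℕ} (hdisj : (I : Set ι).PairwiseDisjoint Y)
    (hcard : ∀ i ∈ I, B ≤ #(Y i)) (hlen : ∀ i ∈ I, ∀ y ∈ Y i, y.length = L) :
    #I * B ≤ Fintype.card α ^ L := by
  calc #I * B ≤ ∑ i ∈ I, #(Y i) := by simpa using card_nsmul_le_sum I _ B hcard
    _ = #(I.biUnion Y) := (card_biUnion hdisj).symm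
    _ ≤ Fintype.card α ^ L := card_le_pow_of_forall_length_eq fun y hy => by
      obtain ⟨i, hi, hy⟩ := mem_biUnion.1 hy
      exact hlen i hi y hy

theorem stmt16_general (q n k s t w m : ℕ) (hq : 2 ≤ q) (hk : 1 ≤ k)
    (hst : s ≤ t)
    (C : Set (List (ZMod q)))
    (hClen : ∀ x ∈ C, x.length = n)
    (hCw : ∀ x ∈ C, wt q x = w)
    (hCm : ∀ x ∈ C, m ≤ (zeroRuns q x).countP (fun r => decide (k ≤ r)))
    (hcorr : ∀ x ∈ C, ∀ x' ∈ C, ∀ y,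
      (∃ a b, a + b ≤ t ∧ IndelN q k a b x y) →
      (∃ a b, a + b ≤ t ∧ IndelN q k a b x' y) → x = x') :
    C.ncard * Nat.choose (w + s) s * Nat.choose (m - s) (t - s)
      ≤ q ^ (n + k * (2 * s) - k * t) := by
  have : NeZero q := ⟨by omega⟩
  obtain hC | hC := C.infinite_or_finite
  · simp [hC.ncard]
  choose! Y hYcard hYindel using fun x (hx : x ∈ C) =>
    exists_finset_indelN (q := q) hk s (t - s) x (hCm x hx)
  rw [Set.ncard_eq_toFinset_card C hC, mul_assoc]
  refine (card_mul_le_pow_of_pairwiseDisjoint (α := ZMod q) (Y := Y) ?_ ?_ ?_).trans_eq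
    (by rw [ZMod.card]) <;>
    simp only [Set.Finite.coe_toFinset, Set.Finite.mem_toFinset]
  · intro x hx x' hx' hne
    exact disjoint_left.2 fun y hy hy' => hne <| hcorr x hx x' hx' y
      ⟨s, t - s, by omega, hYindel x hx y hy⟩ ⟨s, t - s, by omega, hYindel x' hx' y hy'⟩
  · exact fun x hx => hCw x hx ▸ hYcard x hx
  · intro x hx y hy
    have hxy := (hYindel x hx y hy).length_add
    rw [hClen x hx] at hxy
    have hkt : k * t = k * (t - s) + k * s := by rw [← mul_add, Nat.sub_add_cancel hst]
    have hks : k * (2 * s) = k * s + k * s := by ring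
    omega

/-- sphere-packing bound: if `C ⊆ (ℤ_q)^n` corrects `t` insertions
and deletions of blocks `0^k`, every codeword has weight `w` and at least `m` runs
of zeros of length `≥ k`, and `0 ≤ s ≤ min(t,m)`, then
`|C|·C(w+s,s)·C(m-s,t-s) ≤ q^{n+k(2s-t)}` (assuming `n + k(2s-t) ≥ 0`). -/
theorem stmt16 (q n k s t w m : ℕ) (hq : 2 ≤ q) (hn : 1 ≤ n) (hk : 1 ≤ k)
    (hst : s ≤ t) (hsm : s ≤ m) (hlen : k * t ≤ n + k * (2 * s))
    (C : Set (List (ZMod q)))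
    (hClen : ∀ x ∈ C, x.length = n)
    (hCw : ∀ x ∈ C, wt q x = w)
    (hCm : ∀ x ∈ C, m ≤ (zeroRuns q x).countP (fun r => decide (k ≤ r)))
    (hcorr : ∀ x ∈ C, ∀ x' ∈ C, ∀ y,
      (∃ a b, a + b ≤ t ∧ IndelN q k a b x y) →
      (∃ a b, a + b ≤ t ∧ IndelN q k a b x' y) → x = x') :
    C.ncard * Nat.choose (w + s) s * Nat.choose (m - s) (t - s)
      ≤ q ^ (n + k * (2 * s) - k * t) :=
  stmt16_general q n k s t w m hq hk hst C hClen hCw hCm hcorr
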